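/- arXiv:2108.06391 — 2 statements merged into one kernel-verified Lean document; each statement's English description precedes it below -/
import Mathlib

section
/- Define the kernel K_Z(s,t) = (1 − (2·max(s,t) − 1)³)/6 − s·t·(1−s)·(1−t) for s,t ∈ (0,1), let K_1 = K_Z, and define the iterated kernels K_j(s,t) = ∫₀¹ K_{j−1}(s,u)·K_Z(u,t) du for j ≥ 2. Then the fourth cumulant of the limiting null distribution, κ_4 = 2³·3!·∫₀¹ K_4(t,t) dt, equals 200311667/23260111875. -/
/-!
On each of the regions `s ≤ t` and `t ≤ s` the kernel `K_Z` is a polynomial, so `K_2` is an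
explicit polynomial in `(min s t, max s t)`. By Fubini
`K_4(t,t) = ∫ K_2(t,v) K_2(v,t) dv = ∫ K_2(t,v)² dv`, and the trace of `K_4` becomes the
integral of the square of a known polynomial over the two triangles `v ≤ t` and `t ≤ v`.
-/

open MeasureTheory Set

/-- The covariance kernel of the limiting Gaussian process. -/
noncomputable def KZ (s t : ℝ) : ℝ :=
  (1 - (2 * max s t - 1) ^ 3) / 6 - s * t * (1 - s) * (1 - t)

/-- The iterated kernels: `Kiter 1 = K_Z` (i.e. `K_1`) and, for `j ≥ 2`,
`K_j(s,t) = ∫₀¹ K_{j−1}(s,u)·K_Z(u,t) du`.  Here `Kiter j` represents `K_j`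
(the value at `j = 0` is irrelevant). -/
noncomputable def Kiter : ℕ → ℝ → ℝ → ℝ
  | 0, s, t => KZ s t
  | 1, s, t => KZ s t
  | (j + 2), s, t => ∫ u in Set.Ioo (0 : ℝ) 1, Kiter (j + 1) s u * KZ u t

noncomputable def polyEval2 {m n : ℕ} (c : Matrix (Fin m) (Fin n) ℝ) (s t : ℝ) : ℝ :=
  ∑ i, ∑ j, c i j * s ^ (i : ℕ) * t ^ (j : ℕ)

theorem polyEval2_eq_sum_fst {m n : ℕ} (c : Matrix (Fin m) (Fin n) ℝ) (s t : ℝ) :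
    polyEval2 c s t = ∑ i, (∑ j, c i j * t ^ (j : ℕ)) * s ^ (i : ℕ) := by
  simp only [polyEval2, Finset.sum_mul]
  exact Finset.sum_congr rfl fun i _ => Finset.sum_congr rfl fun j _ => by ring

theorem polyEval2_eq_sum_snd {m n : ℕ} (c : Matrix (Fin m) (Fin n) ℝ) (s t : ℝ) :
    polyEval2 c s t = ∑ j, (∑ i, c i j * s ^ (i : ℕ)) * t ^ (j : ℕ) := by
  simp only [polyEval2, Finset.sum_mul]
  rw [Finset.sum_comm]

theorem continuous_polyEval2 {m n : ℕ} (c : Matrix (Fin m) (Fin n) ℝ) :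
    Continuous fun p : ℝ × ℝ => polyEval2 c p.1 p.2 := by
  unfold polyEval2
  fun_prop

namespace intervalIntegral

/-- `simp` cannot use `integral_const_mul` here: it does not unify `?f x` with `x`. -/
theorem integral_const_mul_id (r a b : ℝ) :
    ∫ x in a..b, r * x = r * ((b ^ 2 - a ^ 2) / 2) := by
  rw [integral_const_mul, integral_id]

theorem integral_sum_mul_pow_sq {ι : Type*} (S : Finset ι) (c : ι → ℝ) (n : ι → ℕ) (a b : ℝ) :
    ∫ x in a..b, (∑ i ∈ S, c i * x ^ n i) ^ 2
      = ∑ i ∈ S, ∑ j ∈ S, c i * c j *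
          ((b ^ (n i + n j + 1) - a ^ (n i + n j + 1)) / (n i + n j + 1)) := by
  have hsq : ∀ x : ℝ,
      (∑ i ∈ S, c i * x ^ n i) ^ 2 = ∑ i ∈ S, ∑ j ∈ S, c i * c j * x ^ (n i + n j) := fun x => by
    rw [sq, Finset.sum_mul_sum]
    exact Finset.sum_congr rfl fun i _ => Finset.sum_congr rfl fun j _ => by ring
  simp_rw [hsq]
  rw [integral_finsetSum fun i _ => (by fun_prop : Continuous _).intervalIntegrable _ _]
  refine Finset.sum_congr rfl fun i _ => ?_
  rw [integral_finsetSum fun j _ => (by fun_prop : Continuous _).intervalIntegrable _ _]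
  simp only [integral_const_mul, integral_pow]
  push_cast
  rfl

theorem integral_polyEval2_fst_sq {m n : ℕ} (c : Matrix (Fin m) (Fin n) ℝ) (t a b : ℝ) :
    ∫ x in a..b, polyEval2 c x t ^ 2
      = ∑ i, ∑ k, (∑ j, c i j * t ^ (j : ℕ)) * (∑ j, c k j * t ^ (j : ℕ)) *
          ((b ^ ((i : ℕ) + k + 1) - a ^ ((i : ℕ) + k + 1)) / ((i : ℕ) + k + 1)) := by
  simp only [polyEval2_eq_sum_fst c _ t, integral_sum_mul_pow_sq]

theorem integral_polyEval2_snd_sq {m n : ℕ} (c : Matrix (Fin m) (Fin n) ℝ) (s a b : ℝ) :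
    ∫ x in a..b, polyEval2 c s x ^ 2
      = ∑ j, ∑ l, (∑ i, c i j * s ^ (i : ℕ)) * (∑ i, c i l * s ^ (i : ℕ)) *
          ((b ^ ((j : ℕ) + l + 1) - a ^ ((j : ℕ) + l + 1)) / ((j : ℕ) + l + 1)) := by
  simp only [polyEval2_eq_sum_snd c s, integral_sum_mul_pow_sq]

end intervalIntegral

theorem setIntegral_Ioo_eq_intervalIntegral {a b : ℝ} (hab : a ≤ b) (f : ℝ → ℝ) :
    ∫ x in Ioo a b, f x = ∫ x in a..b, f x := by
  rw [intervalIntegral.integral_of_le hab, integral_Ioc_eq_integral_Ioo]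

theorem setIntegral_Ioo_setIntegral_mul_swap {g h : ℝ → ℝ} {B : ℝ → ℝ → ℝ} (hg : Continuous g)
    (hB : Continuous fun p : ℝ × ℝ => B p.1 p.2) (hh : Continuous h) (a b : ℝ) :
    ∫ u in Ioo a b, (∫ v in Ioo a b, g v * B v u) * h u
      = ∫ v in Ioo a b, g v * ∫ u in Ioo a b, B v u * h u := by
  have hint : Integrable (Function.uncurry fun u v => g v * B v u * h u)
      ((volume.restrict (Ioo a b)).prod (volume.restrict (Ioo a b))) := by
    rw [Measure.prod_restrict, ← Measure.volume_eq_prod]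
    exact ((by fun_prop : Continuous fun p : ℝ × ℝ => g p.2 * B p.2 p.1 * h p.1).continuousOn
      |>.integrableOn_compact (isCompact_Icc.prod isCompact_Icc)).mono_set
        (prod_mono Ioo_subset_Icc_self Ioo_subset_Icc_self)
  calc ∫ u in Ioo a b, (∫ v in Ioo a b, g v * B v u) * h u
      = ∫ u in Ioo a b, ∫ v in Ioo a b, g v * B v u * h u := by
        simp only [← integral_mul_const]
    _ = ∫ v in Ioo a b, ∫ u in Ioo a b, g v * B v u * h u := integral_integral_swap hint
    _ = ∫ v in Ioo a b, g v * ∫ u in Ioo a b, B v u * h u := by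
        simp only [← integral_const_mul, mul_assoc]

theorem setIntegral_Ioo_setIntegral_Ioo_min_max {F : ℝ → ℝ → ℝ}
    (hF : Continuous fun p : ℝ × ℝ => F p.1 p.2) {a b : ℝ} (hab : a ≤ b) :
    ∫ t in Ioo a b, ∫ v in Ioo a b, F (min t v) (max t v)
      = ∫ t in a..b, ((∫ v in a..t, F v t) + ∫ v in t..b, F t v) := by
  rw [setIntegral_Ioo_eq_intervalIntegral hab]
  refine intervalIntegral.integral_congr_Ioo_of_le hab fun t ht => ?_
  have hc : Continuous fun v => F (min t v) (max t v) := by fun_prop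
  rw [setIntegral_Ioo_eq_intervalIntegral hab, ← intervalIntegral.integral_add_adjacent_intervals
      (hc.intervalIntegrable a t) (hc.intervalIntegrable t b),
    intervalIntegral.integral_congr_Ioo_of_le ht.1.le fun v hv => by
      rw [min_eq_right hv.2.le, max_eq_left hv.2.le],
    intervalIntegral.integral_congr_Ioo_of_le ht.2.le fun v hv => by
      rw [min_eq_left hv.1.le, max_eq_right hv.1.le]]

noncomputable def KZpoly (s t : ℝ) : ℝ :=
  (1 - (2 * t - 1) ^ 3) / 6 - s * t * (1 - s) * (1 - t)

theorem KZ_of_le {s t : ℝ} (h : s ≤ t) : KZ s t = KZpoly s t := by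
  rw [KZ, KZpoly, max_eq_right h]

theorem KZ_of_ge {s t : ℝ} (h : t ≤ s) : KZ s t = KZpoly t s := by
  rw [KZ, KZpoly, max_eq_left h]
  ring

theorem KZ_comm (s t : ℝ) : KZ s t = KZ t s := by
  rw [KZ, KZ, max_comm]
  ring

theorem continuous_KZ : Continuous fun p : ℝ × ℝ => KZ p.1 p.2 := by
  unfold KZ
  fun_prop

noncomputable def K2coeff : Matrix (Fin 7) (Fin 8) ℝ :=
  !![2/63, -1/36, -5/36, 11/18, -1, 1, -2/3, 4/21;
    -1/36, 1/30, -1/30, 1/6, -7/12, 2/3, -2/9, 0;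
    -5/36, 7/15, -29/30, 1/2, 7/12, -2/3, 2/9, 0;
    4/9, -7/6, 5/2, -16/9, 0, 0, 0, 0;
    -1/3, 5/12, -17/12, 4/3, 0, 0, 0, 0;
    0, 2/3, -2/3, 0, 0, 0, 0, 0;
    0, -2/9, 2/9, 0, 0, 0, 0, 0]

theorem Kiter_two_of_le {s t : ℝ} (h0 : 0 ≤ s) (hst : s ≤ t) (h1 : t ≤ 1) :
    Kiter 2 s t = polyEval2 K2coeff s t := by
  have hc : Continuous fun u => KZ s u * KZ u t := by
    unfold KZ
    fun_prop
  change ∫ u in Ioo 0 1, KZ s u * KZ u t = _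
  rw [setIntegral_Ioo_eq_intervalIntegral zero_le_one,
    ← intervalIntegral.integral_add_adjacent_intervals (hc.intervalIntegrable 0 s)
      (hc.intervalIntegrable s 1),
    ← intervalIntegral.integral_add_adjacent_intervals (hc.intervalIntegrable s t)
      (hc.intervalIntegrable t 1),
    intervalIntegral.integral_congr_Ioo_of_le h0 (g := fun u => KZpoly u s * KZpoly u t)
      fun u hu => by rw [KZ_of_ge hu.2.le, KZ_of_le (hu.2.le.trans hst)],
    intervalIntegral.integral_congr_Ioo_of_le hst (g := fun u => KZpoly s u * KZpoly u t)
      fun u hu => by rw [KZ_of_le hu.1.le, KZ_of_le hu.2.le],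
    intervalIntegral.integral_congr_Ioo_of_le h1 (g := fun u => KZpoly s u * KZpoly t u)
      fun u hu => by rw [KZ_of_le (hst.trans hu.1.le), KZ_of_ge hu.1.le]]
  simp only [KZpoly]
  ring_nf
  simp (disch := apply Continuous.intervalIntegrable; fun_prop) only
    [intervalIntegral.integral_add, intervalIntegral.integral_sub,
    intervalIntegral.integral_const_mul, intervalIntegral.integral_mul_const,
    intervalIntegral.integral_const_mul_id, integral_pow, integral_id,
    intervalIntegral.integral_const, smul_eq_mul]
  simp only [polyEval2, K2coeff, Fin.sum_univ_succ, Fin.sum_univ_zero, Matrix.of_apply,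
    Matrix.cons_val', Matrix.cons_val_zero, Matrix.cons_val_succ, Matrix.cons_val_fin_one,
    Fin.val_zero, Fin.val_succ]
  ring

theorem Kiter_two_comm (s t : ℝ) : Kiter 2 s t = Kiter 2 t s := by
  change ∫ u in Ioo 0 1, KZ s u * KZ u t = ∫ u in Ioo 0 1, KZ t u * KZ u s
  simp only [KZ_comm s, KZ_comm t, mul_comm]

theorem Kiter_two_eq {s t : ℝ} (hs : s ∈ Icc 0 1) (ht : t ∈ Icc 0 1) :
    Kiter 2 s t = polyEval2 K2coeff (min s t) (max s t) := by
  rcases le_total s t with hst | hts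
  · rw [min_eq_left hst, max_eq_right hst, Kiter_two_of_le hs.1 hst ht.2]
  · rw [min_eq_right hts, max_eq_left hts, Kiter_two_comm, Kiter_two_of_le ht.1 hts hs.2]

theorem Kiter_four_self {t : ℝ} (ht : t ∈ Icc 0 1) :
    Kiter 4 t t = ∫ v in Ioo 0 1, polyEval2 K2coeff (min t v) (max t v) ^ 2 := by
  have hK2 : ∀ v ∈ Ioo (0 : ℝ) 1, Kiter 2 t v = polyEval2 K2coeff (min t v) (max t v) :=
    fun v hv => Kiter_two_eq ht (Ioo_subset_Icc_self hv)
  have hcont : Continuous fun v => polyEval2 K2coeff (min t v) (max t v) := by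
    unfold polyEval2
    fun_prop
  calc Kiter 4 t t
      = ∫ u in Ioo 0 1,
          (∫ v in Ioo 0 1, polyEval2 K2coeff (min t v) (max t v) * KZ v u) * KZ u t := by
        refine setIntegral_congr_fun measurableSet_Ioo fun u _ => ?_
        change (∫ v in Ioo 0 1, Kiter 2 t v * KZ v u) * KZ u t = _
        rw [setIntegral_congr_fun measurableSet_Ioo fun v hv => by rw [hK2 v hv]]
    _ = ∫ v in Ioo 0 1, polyEval2 K2coeff (min t v) (max t v) * Kiter 2 v t :=
        setIntegral_Ioo_setIntegral_mul_swap hcont continuous_KZ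
          (by unfold KZ; fun_prop) 0 1
    _ = ∫ v in Ioo 0 1, polyEval2 K2coeff (min t v) (max t v) ^ 2 := by
        refine setIntegral_congr_fun measurableSet_Ioo fun v hv => ?_
        rw [Kiter_two_comm, hK2 v hv, sq]

theorem integral_polyEval2_K2coeff_sq :
    ∫ t in (0 : ℝ)..1,
        ((∫ v in (0 : ℝ)..t, polyEval2 K2coeff v t ^ 2) + ∫ v in t..1, polyEval2 K2coeff t v ^ 2)
      = 200311667 / 1116485370000 := by
  simp only [intervalIntegral.integral_polyEval2_fst_sq,
    intervalIntegral.integral_polyEval2_snd_sq, K2coeff, Fin.sum_univ_succ, Fin.sum_univ_zero,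
    Matrix.of_apply, Matrix.cons_val', Matrix.cons_val_zero, Matrix.cons_val_succ,
    Matrix.cons_val_fin_one, Fin.val_zero, Fin.val_succ]
  push_cast
  ring_nf
  simp (disch := apply Continuous.intervalIntegrable; fun_prop) only
    [intervalIntegral.integral_add, intervalIntegral.integral_mul_const, integral_pow, integral_id,
    intervalIntegral.integral_const, smul_eq_mul]
  norm_num

/-- **Fourth cumulant of the limit distribution**:
`κ₄ = 2³·3!·∫₀¹ K₄(t,t) dt = 200311667/23260111875`. -/
theorem fourth_cumulant_limit :
    (2 : ℝ) ^ 3 * (Nat.factorial 3 : ℝ) * ∫ t in Set.Ioo (0 : ℝ) 1, Kiter 4 t t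
      = 200311667 / 23260111875 := by
  have hF : Continuous fun p : ℝ × ℝ => polyEval2 K2coeff p.1 p.2 ^ 2 :=
    (continuous_polyEval2 K2coeff).pow 2
  rw [setIntegral_congr_fun measurableSet_Ioo fun t ht => Kiter_four_self (Ioo_subset_Icc_self ht),
    setIntegral_Ioo_setIntegral_Ioo_min_max (F := fun x y => polyEval2 K2coeff x y ^ 2) hF
      zero_le_one, integral_polyEval2_K2coeff_sq]
  norm_num [Nat.factorial]
end

section
/- Let U have the Beta(2,2) distribution, i.e., density f(x) = 6x(1−x) on (0,1), and define Ψ(t) = E[(2U−1)·1{U ≥ t}], z(t) = Ψ(t) − t(1−t), and K_W(s,t) = E[(2U−1)²·1{U ≥ max(s,t)}] − Ψ(s)·Ψ(t). Then σ² = 4·∫₀¹∫₀¹ K_W(s,t)·z(s)·z(t) ds dt = 107297/94594500. -/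
/-!
The law of `U` turns `Ψ` and the tail second moment `m(u) = E[(2U-1)² 1{U ≥ u}]` into
polynomials on `(0,1)`: `Ψ(t) = 3t²(1-t)²` and `m(u) = 1/5 - 3u² + 10u³ - 12u⁴ + 24u⁵/5`.
For continuous `m`, `ψ`, `f`, splitting the inner integral at `t = s` and integrating the tail
part by parts gives `∬ (m(max s t) - ψ s ψ t) f s f t = 2 ∫ m f F - (∫ ψ f)²` with
`F(s) = ∫₀ˢ f`. With `f = z` what is left is the integral of a polynomial over `[0,1]`.
-/

open MeasureTheory Set

theorem setIntegral_comp_of_map_eq_withDensity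
    {Ω : Type*} [MeasurableSpace Ω] {P : Measure Ω} {U : Ω → ℝ} (hU : Measurable U)
    {a b : ℝ} {ρ : ℝ → ℝ} (hρ : Measurable ρ)
    (hρ_nonneg : ∀ x ∈ Ioo a b, 0 ≤ ρ x)
    (hlaw : P.map U = (volume.restrict (Ioo a b)).withDensity fun x => ENNReal.ofReal (ρ x))
    (g : ℝ → ℝ) (hg : Measurable g) {t : ℝ} (ht : t ∈ Ioo a b) :
    ∫ ω in {ω | t ≤ U ω}, g (U ω) ∂P = ∫ x in t..b, g x * ρ x := by
  have hset : Ici t ∩ Ioo a b = Ico t b := by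
    ext x
    simp only [mem_inter_iff, mem_Ici, mem_Ioo, mem_Ico]
    constructor
    · rintro ⟨htx, -, hxb⟩; exact ⟨htx, hxb⟩
    · rintro ⟨htx, hxb⟩; exact ⟨htx, ht.1.trans_le htx, hxb⟩
  rw [show {ω | t ≤ U ω} = U ⁻¹' Ici t from rfl,
    ← setIntegral_map measurableSet_Ici hg.aestronglyMeasurable hU.aemeasurable, hlaw,
    setIntegral_withDensity_eq_setIntegral_toReal_smul (by fun_prop)
      (ae_of_all _ fun _ => ENNReal.ofReal_lt_top) g measurableSet_Ici,
    Measure.restrict_restrict measurableSet_Ici, hset, integral_Ico_eq_integral_Ioo,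
    intervalIntegral.integral_of_le ht.2.le, integral_Ioc_eq_integral_Ioo]
  refine setIntegral_congr_fun measurableSet_Ioo fun x hx => ?_
  rw [ENNReal.toReal_ofReal (hρ_nonneg x ⟨ht.1.trans hx.1, hx.2⟩), smul_eq_mul,
    mul_comm]

theorem setIntegral_Ioo_Ioo_eq_intervalIntegral {F G : ℝ → ℝ → ℝ} {a b : ℝ} (hab : a ≤ b)
    (h : ∀ s ∈ Ioo a b, ∀ t ∈ Ioo a b, F s t = G s t) :
    ∫ s in Ioo a b, ∫ t in Ioo a b, F s t = ∫ s in a..b, ∫ t in a..b, G s t := by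
  rw [intervalIntegral.integral_of_le hab, integral_Ioc_eq_integral_Ioo]
  refine setIntegral_congr_fun measurableSet_Ioo fun s hs => ?_
  rw [intervalIntegral.integral_of_le hab, integral_Ioc_eq_integral_Ioo]
  exact setIntegral_congr_fun measurableSet_Ioo (h s hs)

theorem integral_mul_integral_tail_eq {f g : ℝ → ℝ} (hf : Continuous f) (hg : Continuous g)
    (a b : ℝ) :
    ∫ s in a..b, f s * ∫ t in s..b, g t = ∫ t in a..b, g t * ∫ s in a..t, f s := by
  have parts := intervalIntegral.integral_mul_deriv_eq_deriv_mul
    (fun x _ => intervalIntegral.integral_hasDerivAt_left (hg.intervalIntegrable x b)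
      (hg.stronglyMeasurableAtFilter _ _) hg.continuousAt)
    (fun x _ => (hf.integral_hasStrictDerivAt a x).hasDerivAt)
    (hg.neg.intervalIntegrable a b) (hf.intervalIntegrable a b)
  simp only [intervalIntegral.integral_same, zero_mul, mul_zero, sub_zero, zero_sub, neg_mul,
    intervalIntegral.integral_neg, neg_neg] at parts
  rw [← parts]
  exact intervalIntegral.integral_congr fun x _ => mul_comm _ _

theorem integral_comp_max_mul {m f : ℝ → ℝ} (hm : Continuous m) (hf : Continuous f)
    {a b s : ℝ} (hs : s ∈ Icc a b) :
    ∫ t in a..b, m (max s t) * f t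
      = m s * (∫ t in a..s, f t) + ∫ t in s..b, m t * f t := by
  have hint : ∀ c d, IntervalIntegrable (fun t => m (max s t) * f t) volume c d := fun c d =>
    (by fun_prop : Continuous fun t => m (max s t) * f t).intervalIntegrable c d
  rw [← intervalIntegral.integral_add_adjacent_intervals (hint a s) (hint s b)]
  congr 1
  · rw [← intervalIntegral.integral_const_mul]
    refine intervalIntegral.integral_congr fun t ht => ?_
    rw [uIcc_of_le hs.1] at ht
    simp only [max_eq_left ht.2]
  · refine intervalIntegral.integral_congr fun t ht => ?_
    rw [uIcc_of_le hs.2] at ht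
    simp only [max_eq_right ht.1]

theorem integral_integral_max_kernel {m ψ f : ℝ → ℝ} (hm : Continuous m) (hψ : Continuous ψ)
    (hf : Continuous f) {a b : ℝ} (hab : a ≤ b) :
    ∫ s in a..b, ∫ t in a..b, (m (max s t) - ψ s * ψ t) * f s * f t
      = 2 * (∫ s in a..b, m s * f s * ∫ t in a..s, f t) - (∫ s in a..b, ψ s * f s) ^ 2 := by
  have hF : Continuous fun s => ∫ t in a..s, f t :=
    intervalIntegral.continuous_primitive (fun c d => hf.intervalIntegrable c d) a
  have hG : Continuous fun s => ∫ t in s..b, m t * f t :=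
    continuous_iff_continuousAt.2 fun x =>
      (intervalIntegral.integral_hasDerivAt_left ((hm.mul hf).intervalIntegrable x b)
        ((hm.mul hf).stronglyMeasurableAtFilter _ _) (hm.mul hf).continuousAt).continuousAt
  have inner : ∀ s ∈ uIcc a b, ∫ t in a..b, (m (max s t) - ψ s * ψ t) * f s * f t
      = f s * (m s * (∫ t in a..s, f t) + ∫ t in s..b, m t * f t)
        - ψ s * f s * ∫ t in a..b, ψ t * f t := by
    intro s hs
    rw [uIcc_of_le hab] at hs
    rw [← integral_comp_max_mul hm hf hs, ← intervalIntegral.integral_const_mul,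
      ← intervalIntegral.integral_const_mul, ← intervalIntegral.integral_sub]
    · exact intervalIntegral.integral_congr fun t _ => by ring
    all_goals exact Continuous.intervalIntegrable (by fun_prop) _ _
  calc _ = ∫ s in a..b, (m s * f s * (∫ t in a..s, f t) + f s * ∫ t in s..b, m t * f t)
          - ψ s * f s * ∫ t in a..b, ψ t * f t :=
        intervalIntegral.integral_congr fun s hs => (inner s hs).trans (by ring)
    _ = _ := by
      rw [intervalIntegral.integral_sub, intervalIntegral.integral_add,
        intervalIntegral.integral_mul_const,
        integral_mul_integral_tail_eq (g := fun t => m t * f t) hf (hm.mul hf)]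
      · ring
      all_goals exact Continuous.intervalIntegrable (by fun_prop) _ _

theorem integral_two_mul_sub_one_mul_beta22_density (t : ℝ) :
    ∫ x in t..1, (2 * x - 1) * (6 * x * (1 - x)) = 3 * t ^ 2 * (1 - t) ^ 2 := by
  ring_nf
  simp (disch := exact Continuous.intervalIntegrable (by fun_prop) _ _) only
    [intervalIntegral.integral_add, intervalIntegral.integral_sub, intervalIntegral.integral_neg,
      intervalIntegral.integral_mul_const, integral_pow, integral_id]
  ring

theorem integral_two_mul_sub_one_sq_mul_beta22_density (t : ℝ) :
    ∫ x in t..1, (2 * x - 1) ^ 2 * (6 * x * (1 - x))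
      = 1 / 5 - 3 * t ^ 2 + 10 * t ^ 3 - 12 * t ^ 4 + 24 / 5 * t ^ 5 := by
  ring_nf
  simp (disch := exact Continuous.intervalIntegrable (by fun_prop) _ _) only
    [intervalIntegral.integral_add, intervalIntegral.integral_sub,
      intervalIntegral.integral_mul_const, integral_pow, integral_id]
  ring

theorem integral_beta22_z (s : ℝ) :
    ∫ t in (0 : ℝ)..s, (3 * t ^ 2 * (1 - t) ^ 2 - t * (1 - t))
      = -1 / 2 * s ^ 2 + 4 / 3 * s ^ 3 - 3 / 2 * s ^ 4 + 3 / 5 * s ^ 5 := by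
  ring_nf
  simp (disch := exact Continuous.intervalIntegrable (by fun_prop) _ _) only
    [intervalIntegral.integral_add, intervalIntegral.integral_sub,
      intervalIntegral.integral_mul_const, integral_pow]
  rw [intervalIntegral.integral_neg, integral_id]
  ring

theorem beta_2_2_sigma_sq_general
    {Ω : Type*} [MeasurableSpace Ω] (P : Measure Ω)
    (U : Ω → ℝ) (hU : Measurable U)
    (hlaw : P.map U = (volume.restrict (Set.Ioo (0 : ℝ) 1)).withDensity
      (fun x => ENNReal.ofReal (6 * x * (1 - x))))
    (Ψ z : ℝ → ℝ) (KW : ℝ → ℝ → ℝ)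
    (hΨ : ∀ t, Ψ t = ∫ ω in {ω | t ≤ U ω}, (2 * U ω - 1) ∂P)
    (hz : ∀ t, z t = Ψ t - t * (1 - t))
    (hKW : ∀ s t, KW s t =
      (∫ ω in {ω | max s t ≤ U ω}, (2 * U ω - 1) ^ 2 ∂P) - Ψ s * Ψ t) :
    4 * ∫ s in Set.Ioo (0 : ℝ) 1, ∫ t in Set.Ioo (0 : ℝ) 1, KW s t * z s * z t
      = 107297 / 94594500 := by
  have transfer := setIntegral_comp_of_map_eq_withDensity hU (by fun_prop)
    (fun x hx => by nlinarith [hx.1, hx.2]) hlaw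
  set ψ : ℝ → ℝ := fun t => 3 * t ^ 2 * (1 - t) ^ 2 with hψ
  set m : ℝ → ℝ := fun u => 1 / 5 - 3 * u ^ 2 + 10 * u ^ 3 - 12 * u ^ 4 + 24 / 5 * u ^ 5
    with hm
  have hΨψ : ∀ t ∈ Ioo (0 : ℝ) 1, Ψ t = ψ t := fun t ht =>
    (hΨ t).trans ((transfer _ (by fun_prop) ht).trans
      (integral_two_mul_sub_one_mul_beta22_density t))
  have hkernel : ∀ s ∈ Ioo (0 : ℝ) 1, ∀ t ∈ Ioo (0 : ℝ) 1, KW s t * z s * z t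
      = (m (max s t) - ψ s * ψ t) * (ψ s - s * (1 - s)) * (ψ t - t * (1 - t)) := by
    intro s hs t ht
    rw [hKW, hz, hz, hΨψ s hs, hΨψ t ht, transfer (fun x => (2 * x - 1) ^ 2) (by fun_prop)
      ⟨lt_max_of_lt_left hs.1, max_lt hs.2 ht.2⟩,
      integral_two_mul_sub_one_sq_mul_beta22_density]
  rw [setIntegral_Ioo_Ioo_eq_intervalIntegral zero_le_one hkernel,
    integral_integral_max_kernel (by fun_prop) (by fun_prop) (by fun_prop) zero_le_one]
  simp only [hψ, hm, integral_beta22_z]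
  ring_nf
  simp (disch := exact Continuous.intervalIntegrable (by fun_prop) _ _) only
    [intervalIntegral.integral_add, intervalIntegral.integral_sub, intervalIntegral.integral_neg,
      intervalIntegral.integral_mul_const, integral_pow]
  norm_num

/-- **Example (a), Beta(2,2), limiting variance**: if `U` has density `6x(1−x)` on
`(0,1)`, `Ψ(t) = E[(2U−1)·1{U ≥ t}]`, `z(t) = Ψ(t) − t(1−t)` and
`K_W(s,t) = E[(2U−1)²·1{U ≥ max(s,t)}] − Ψ(s)Ψ(t)`, then
`σ² = 4·∫₀¹∫₀¹ K_W(s,t)·z(s)·z(t) ds dt = 107297/94594500`. -/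
theorem beta_2_2_sigma_sq
    {Ω : Type*} [MeasurableSpace Ω] (P : Measure Ω) [IsProbabilityMeasure P]
    (U : Ω → ℝ) (hU : Measurable U)
    (hlaw : P.map U = (volume.restrict (Set.Ioo (0 : ℝ) 1)).withDensity
      (fun x => ENNReal.ofReal (6 * x * (1 - x))))
    (Ψ z : ℝ → ℝ) (KW : ℝ → ℝ → ℝ)
    (hΨ : ∀ t, Ψ t = ∫ ω in {ω | t ≤ U ω}, (2 * U ω - 1) ∂P)
    (hz : ∀ t, z t = Ψ t - t * (1 - t))
    (hKW : ∀ s t, KW s t =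
      (∫ ω in {ω | max s t ≤ U ω}, (2 * U ω - 1) ^ 2 ∂P) - Ψ s * Ψ t) :
    4 * ∫ s in Set.Ioo (0 : ℝ) 1, ∫ t in Set.Ioo (0 : ℝ) 1, KW s t * z s * z t
      = 107297 / 94594500 :=
  beta_2_2_sigma_sq_general P U hU hlaw Ψ z KW hΨ hz hKW
end
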